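/- arXiv:2509.01172 — 4 statements merged into one kernel-verified Lean document; each statement's English description precedes it below -/
import Mathlib

section
/- Let n, d, m be positive integers, let each local cost f_i : ℝ^d → ℝ (i = 1,…,n) be differentiable and μ_i-strongly convex with μ_i > 0, let each constraint function g_j : ℝ^d → ℝ (j = 1,…,m) be differentiable and convex, and let υ > 0. Set μ := min{υ, μ_1, …, μ_n}. Then the primal-dual gradient map Φ of the regularized Lagrangian L is μ-strongly monotone on ℝ^{nd} × ℝ₊^m: for all w = (θ, λ) and w' = (θ', λ') with θ, θ' ∈ ℝ^{nd} and λ, λ' ∈ ℝ₊^m (componentwise nonnegative), one has ⟨Φ(w) − Φ(w'), w − w'⟩ ≥ μ ‖w − w'‖². -/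
/-!
The primal block of `⟨Φ(w) - Φ(w'), w - w'⟩` splits into the local terms
`⟨∇f_i(θ_i) - ∇f_i(θ'_i), θ_i - θ'_i⟩ ≥ μ_i ‖θ_i - θ'_i‖²` (the gradient of a `μ_i`-strongly convex
function is `μ_i`-strongly monotone) and a coupling term which, because every worker sees the same
averaged constraint, collapses to `⟨Σ_j (λ_j ∇g_j(θ̄) - λ'_j ∇g_j(θ̄')), θ̄ - θ̄'⟩`. For `λ, λ' ≥ 0`
the gradient inequality of the convex `g_j` bounds this coupling below by
`Σ_j (g_j(θ̄) - g_j(θ̄'))(λ_j - λ'_j)`, which cancels the constraint part of the dual block and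
leaves `υ ‖λ - λ'‖²`.
-/

open scoped InnerProductSpace

theorem ConvexOn.le_sub_of_hasFDerivAt {E : Type*} [NormedAddCommGroup E] [NormedSpace ℝ E]
    {s : Set E} {h : E → ℝ} {h' : E →L[ℝ] ℝ} {x y : E} (hc : ConvexOn ℝ s h)
    (hx : x ∈ s) (hy : y ∈ s) (hd : HasFDerivAt h h' x) :
    h' (y - x) ≤ h y - h x := by
  have hline : ConvexOn ℝ (Set.Icc 0 1) (h ∘ (AffineMap.lineMap x y : ℝ →ᵃ[ℝ] E)) :=
    (hc.comp_affineMap _).subset (fun _ ht => hc.1.lineMap_mem hx hy ht) (convex_Icc 0 1)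
  have hderiv : HasDerivAt (h ∘ (AffineMap.lineMap x y : ℝ →ᵃ[ℝ] E)) (h' (y - x)) 0 := by
    refine HasFDerivAt.comp_hasDerivAt (0 : ℝ) ?_ AffineMap.hasDerivAt_lineMap
    simpa using hd
  simpa [slope_def_field] using
    hline.le_slope_of_hasDerivAt (by simp) (by simp) zero_lt_one hderiv

variable {E : Type*} [NormedAddCommGroup E] [InnerProductSpace ℝ E] [CompleteSpace E]
  {s : Set E} {x y G H : E}

theorem ConvexOn.inner_gradient_le_sub {g : E → ℝ} (hc : ConvexOn ℝ s g) (hx : x ∈ s)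
    (hy : y ∈ s) (hg : HasGradientAt g G x) : ⟪G, y - x⟫_ℝ ≤ g y - g x :=
  hc.le_sub_of_hasFDerivAt hx hy (hasGradientAt_iff_hasFDerivAt.mp hg)

theorem ConvexOn.sub_mul_le_inner_smul_gradient_sub {g : E → ℝ} {a b : ℝ}
    (hc : ConvexOn ℝ s g) (hx : x ∈ s) (hy : y ∈ s) (hgx : HasGradientAt g G x)
    (hgy : HasGradientAt g H y) (ha : 0 ≤ a) (hb : 0 ≤ b) :
    (g x - g y) * (a - b) ≤ ⟪a • G - b • H, x - y⟫_ℝ := by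
  have hGx := hc.inner_gradient_le_sub hx hy hgx
  have hHy := hc.inner_gradient_le_sub hy hx hgy
  rw [← neg_sub x y, inner_neg_right] at hGx
  rw [inner_sub_left, real_inner_smul_left, real_inner_smul_left]
  linarith [mul_le_mul_of_nonneg_left hGx ha, mul_le_mul_of_nonneg_left hHy hb]

theorem ConvexOn.inner_gradient_sub_nonneg {g : E → ℝ} (hc : ConvexOn ℝ s g) (hx : x ∈ s)
    (hy : y ∈ s) (hgx : HasGradientAt g G x) (hgy : HasGradientAt g H y) :
    0 ≤ ⟪G - H, x - y⟫_ℝ := by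
  simpa using hc.sub_mul_le_inner_smul_gradient_sub hx hy hgx hgy zero_le_one zero_le_one

theorem HasGradientAt.sub_mul_norm_sq {f : E → ℝ} (hf : HasGradientAt f G x) (m : ℝ) :
    HasGradientAt (fun x => f x - m / 2 * ‖x‖ ^ 2) (G - m • x) x := by
  rw [hasGradientAt_iff_hasFDerivAt] at hf ⊢
  refine (hf.sub ((hasStrictFDerivAt_norm_sq x).hasFDerivAt.const_mul (m / 2))).congr_fderiv ?_
  ext v
  simp only [sub_apply, smul_apply, InnerProductSpace.toDual_apply_apply, coe_innerSL_apply,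
    nsmul_eq_mul, Nat.cast_ofNat, smul_eq_mul, map_sub, map_smul, sub_right_inj]
  ring

theorem StrongConvexOn.mul_norm_sq_le_inner_gradient_sub {f : E → ℝ} {m : ℝ}
    (hf : StrongConvexOn s m f) (hx : x ∈ s) (hy : y ∈ s) (hfx : HasGradientAt f G x)
    (hfy : HasGradientAt f H y) :
    m * ‖x - y‖ ^ 2 ≤ ⟪G - H, x - y⟫_ℝ := by
  have hmono := (strongConvexOn_iff_convex.mp hf).inner_gradient_sub_nonneg hx hy
    (hfx.sub_mul_norm_sq m) (hfy.sub_mul_norm_sq m)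
  rwa [sub_sub_sub_comm, ← smul_sub, inner_sub_left, real_inner_smul_left,
    real_inner_self_eq_norm_sq, sub_nonneg] at hmono

omit [CompleteSpace E] in
theorem sum_inner_add_smul_sub {ι : Type*} [Fintype ι] (a b θ θ' : ι → E) (c : ℝ)
    (u u' : E) :
    ∑ i, ⟪(a i + c • u) - (b i + c • u'), θ i - θ' i⟫_ℝ
      = ∑ i, ⟪a i - b i, θ i - θ' i⟫_ℝ + ⟪u - u', c • ∑ i, θ i - c • ∑ i, θ' i⟫_ℝ := by
  rw [← smul_sub, ← Finset.sum_sub_distrib, Finset.smul_sum, inner_sum,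
    ← Finset.sum_add_distrib]
  refine Finset.sum_congr rfl fun i _ => ?_
  rw [add_sub_add_comm, ← smul_sub, inner_add_left, real_inner_smul_left, real_inner_smul_right]

theorem stmt0_general
    (n d m : ℕ) (hn : 0 < n)
    (f : Fin n → EuclideanSpace ℝ (Fin d) → ℝ)
    (f' : Fin n → EuclideanSpace ℝ (Fin d) → EuclideanSpace ℝ (Fin d))
    (μi : Fin n → ℝ)
    (hf' : ∀ i x, HasGradientAt (f i) (f' i x) x)
    (hsc : ∀ i, ConvexOn ℝ Set.univ (fun x => f i x - μi i / 2 * ‖x‖ ^ 2))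
    (g : Fin m → EuclideanSpace ℝ (Fin d) → ℝ)
    (g' : Fin m → EuclideanSpace ℝ (Fin d) → EuclideanSpace ℝ (Fin d))
    (hg' : ∀ j x, HasGradientAt (g j) (g' j x) x)
    (hgconv : ∀ j, ConvexOn ℝ Set.univ (g j))
    (υ : ℝ)
    (μ : ℝ)
    (hμ : μ = min υ (Finset.univ.inf' ⟨⟨0, hn⟩, Finset.mem_univ _⟩ μi)) :
    ∀ (θ θ' : Fin n → EuclideanSpace ℝ (Fin d)) (lam lam' : Fin m → ℝ),
      (∀ j, 0 ≤ lam j) → (∀ j, 0 ≤ lam' j) →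
      (∑ i, ⟪(f' i (θ i) + (n : ℝ)⁻¹ • ∑ j, lam j • g' j ((n : ℝ)⁻¹ • ∑ i', θ i'))
              - (f' i (θ' i) + (n : ℝ)⁻¹ • ∑ j, lam' j • g' j ((n : ℝ)⁻¹ • ∑ i', θ' i')),
            θ i - θ' i⟫_ℝ)
        + ∑ j, ((-(g j ((n : ℝ)⁻¹ • ∑ i', θ i') - υ * lam j))
                 - (-(g j ((n : ℝ)⁻¹ • ∑ i', θ' i') - υ * lam' j))) * (lam j - lam' j)
      ≥ μ * ((∑ i, ‖θ i - θ' i‖ ^ 2) + ∑ j, (lam j - lam' j) ^ 2) := by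
  intro θ θ' lam lam' hlam hlam'
  have hμυ : μ ≤ υ := hμ ▸ min_le_left _ _
  have hμμi (i : Fin n) : μ ≤ μi i :=
    hμ ▸ (min_le_right _ _).trans (Finset.inf'_le _ (Finset.mem_univ i))
  rw [sum_inner_add_smul_sub, inner_sub_left, sum_inner, sum_inner,
    ← Finset.sum_sub_distrib, add_assoc, ← Finset.sum_add_distrib, mul_add, Finset.mul_sum,
    Finset.mul_sum, ge_iff_le]
  set θbar := (n : ℝ)⁻¹ • ∑ i', θ i'
  set θbar' := (n : ℝ)⁻¹ • ∑ i', θ' i'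
  refine add_le_add (Finset.sum_le_sum fun i _ => ?_) (Finset.sum_le_sum fun j _ => ?_)
  · calc μ * ‖θ i - θ' i‖ ^ 2 ≤ μi i * ‖θ i - θ' i‖ ^ 2 := by gcongr; exact hμμi i
      _ ≤ _ := (strongConvexOn_iff_convex.mpr (hsc i)).mul_norm_sq_le_inner_gradient_sub
          (Set.mem_univ _) (Set.mem_univ _) (hf' i _) (hf' i _)
  · have hcoupling := (hgconv j).sub_mul_le_inner_smul_gradient_sub (Set.mem_univ θbar)
      (Set.mem_univ θbar') (hg' j _) (hg' j _) (hlam j) (hlam' j)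
    rw [← inner_sub_left]
    linarith [mul_le_mul_of_nonneg_right hμυ (sq_nonneg (lam j - lam' j))]

/-- Strong monotonicity of the primal-dual gradient map `Φ` of the
regularized Lagrangian `L(θ, λ) = Σ_i f_i(θ_i) + λᵀ g(θ̄) - (υ/2)‖λ‖²`:
for componentwise nonnegative dual variables, the inner product
`⟨Φ(w) - Φ(w'), w - w'⟩` (written out blockwise) is at least `μ ‖w - w'‖²`
with `μ = min {υ, μ_1, …, μ_n}`. -/
theorem stmt0
    (n d m : ℕ) (hn : 0 < n) (hd : 0 < d) (hm : 0 < m)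
    (f : Fin n → EuclideanSpace ℝ (Fin d) → ℝ)
    (f' : Fin n → EuclideanSpace ℝ (Fin d) → EuclideanSpace ℝ (Fin d))
    (μi : Fin n → ℝ) (hμi : ∀ i, 0 < μi i)
    (hf' : ∀ i x, HasGradientAt (f i) (f' i x) x)
    (hsc : ∀ i, ConvexOn ℝ Set.univ (fun x => f i x - μi i / 2 * ‖x‖ ^ 2))
    (g : Fin m → EuclideanSpace ℝ (Fin d) → ℝ)
    (g' : Fin m → EuclideanSpace ℝ (Fin d) → EuclideanSpace ℝ (Fin d))
    (hg' : ∀ j x, HasGradientAt (g j) (g' j x) x)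
    (hgconv : ∀ j, ConvexOn ℝ Set.univ (g j))
    (υ : ℝ) (hυ : 0 < υ)
    (μ : ℝ)
    (hμ : μ = min υ (Finset.univ.inf' ⟨⟨0, hn⟩, Finset.mem_univ _⟩ μi)) :
    ∀ (θ θ' : Fin n → EuclideanSpace ℝ (Fin d)) (lam lam' : Fin m → ℝ),
      (∀ j, 0 ≤ lam j) → (∀ j, 0 ≤ lam' j) →
      (∑ i, ⟪(f' i (θ i) + (n : ℝ)⁻¹ • ∑ j, lam j • g' j ((n : ℝ)⁻¹ • ∑ i', θ i'))
              - (f' i (θ' i) + (n : ℝ)⁻¹ • ∑ j, lam' j • g' j ((n : ℝ)⁻¹ • ∑ i', θ' i')),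
            θ i - θ' i⟫_ℝ)
        + ∑ j, ((-(g j ((n : ℝ)⁻¹ • ∑ i', θ i') - υ * lam j))
                 - (-(g j ((n : ℝ)⁻¹ • ∑ i', θ' i') - υ * lam' j))) * (lam j - lam' j)
      ≥ μ * ((∑ i, ‖θ i - θ' i‖ ^ 2) + ∑ j, (lam j - lam' j) ^ 2) :=
  stmt0_general n d m hn f f' μi hf' hsc g g' hg' hgconv υ μ hμ
end

section
/- (Primal one-step descent.) Let C ⊆ ℝ^d be nonempty closed convex with diameter at most D, let γ > 0, α ∈ {0,1}, n ≥ 1, and let θ^k, θ* ∈ C. Let ∇f : ℝ^d → ℝ^d be L-Lipschitz, let A, A* ∈ ℝ^{d×m} be matrices with operator norms at most M, let λ̂, λ* ∈ ℝ^m with ‖λ̂‖ ≤ D and ‖λ*‖ ≤ D, and set h* := ∇f(θ*) + (1/n) A* λ* and 𝒢 := ∇f(θ^k) + (1/n) A λ̂. Assume θ* = P_C(θ* − γ h*). Let Z be a random variable and ∇ℓ(θ^k; Z) a random vector with E[∇ℓ(θ^k; Z)] = ∇f(θ^k) and E‖∇ℓ(θ^k; Z) − ∇f(θ^k)‖² ≤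 σ²(1 + ‖θ^k − θ*‖²). Define θ^{k+1} := P_C(θ^k − γ α (∇ℓ(θ^k; Z) + (1/n) A λ̂)). Then E‖θ^{k+1} − θ*‖² ≤ ‖θ^k − θ*‖² + C₁ γ² − 2 γ α ⟨θ^k − θ*, 𝒢 − h*⟩, where C₁ := 3(σ² + (σ² + L²) D² + 6 M² D² / n²). -/
/-!
For `α = 0` the iterate does not move. For `α = 1`, write `θ* = P_C(θ* - γ h*)` and use that the
nearest-point map of a convex set is nonexpansive: `‖θ^{k+1} - θ*‖ ≤ ‖w - γ ξ‖` with
`w = θ^k - θ* - γ (𝒢 - h*)` and `ξ = ∇ℓ(θ^k; Z) - ∇f(θ^k)` of mean zero, so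
`E‖θ^{k+1} - θ*‖² ≤ ‖w‖² + γ² E‖ξ‖²`. Expanding `‖w‖²` produces the inner-product term, and
`‖𝒢 - h*‖² ≤ 2 L² D² + 8 M² D² / n²` together with `E‖ξ‖² ≤ σ² (1 + D²)` fits into `C₁ γ²`.
-/

open scoped InnerProductSpace
open MeasureTheory

section NearestPoint

variable {E : Type*} [NormedAddCommGroup E] [InnerProductSpace ℝ E] {C : Set E}

theorem inner_sub_le_zero_of_forall_norm_sub_le (hC : Convex ℝ C) {x p : E} (hp : p ∈ C)
    (hmin : ∀ y ∈ C, ‖x - p‖ ≤ ‖x - y‖) : ∀ w ∈ C, ⟪x - p, w - p⟫_ℝ ≤ 0 := by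
  have : Nonempty C := ⟨⟨p, hp⟩⟩
  refine (norm_eq_iInf_iff_real_inner_le_zero hC hp).1 (le_antisymm ?_ ?_)
  · exact le_ciInf fun w => hmin w w.2
  · exact ciInf_le ⟨0, Set.forall_mem_range.2 fun w : C => norm_nonneg (x - w)⟩ (⟨p, hp⟩ : C)

theorem norm_sub_le_of_forall_norm_sub_le (hC : Convex ℝ C) {x y p q : E}
    (hp : p ∈ C) (hq : q ∈ C) (hpmin : ∀ z ∈ C, ‖x - p‖ ≤ ‖x - z‖)
    (hqmin : ∀ z ∈ C, ‖y - q‖ ≤ ‖y - z‖) : ‖p - q‖ ≤ ‖x - y‖ := by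
  have hpq := inner_sub_le_zero_of_forall_norm_sub_le hC hp hpmin q hq
  have hqp := inner_sub_le_zero_of_forall_norm_sub_le hC hq hqmin p hp
  -- sum of the two variational inequalities
  have key : ‖p - q‖ ^ 2 ≤ ⟪x - y, p - q⟫_ℝ := by
    have hsplit : x - y = (p - q) + (x - p) + (q - y) := by abel
    have hneg : ⟪x - p, q - p⟫_ℝ = -⟪x - p, p - q⟫_ℝ := by
      rw [← inner_neg_right, neg_sub]
    have hneg' : ⟪y - q, p - q⟫_ℝ = -⟪q - y, p - q⟫_ℝ := by
      rw [← inner_neg_left, neg_sub]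
    rw [hsplit, inner_add_left, inner_add_left, real_inner_self_eq_norm_sq]
    linarith
  have hcs := real_inner_le_norm (x - y) (p - q)
  nlinarith [norm_nonneg (p - q), norm_nonneg (x - y)]

end NearestPoint

theorem integral_norm_sq_le_of_le_norm_sub_smul {Ω E : Type*} [MeasurableSpace Ω]
    {P : Measure Ω} [IsProbabilityMeasure P] [NormedAddCommGroup E] [InnerProductSpace ℝ E]
    [CompleteSpace E] {ξ Φ : Ω → E} (hξ : Integrable ξ P) (hξ_mean : ∫ ω, ξ ω ∂P = 0)
    (hξ_sq : Integrable (fun ω => ‖ξ ω‖ ^ 2) P) (w : E) (t : ℝ)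
    (hΦ : ∀ ω, ‖Φ ω‖ ≤ ‖w - t • ξ ω‖) :
    ∫ ω, ‖Φ ω‖ ^ 2 ∂P ≤ ‖w‖ ^ 2 + t ^ 2 * ∫ ω, ‖ξ ω‖ ^ 2 ∂P := by
  have hexpand : ∀ ω, ‖w - t • ξ ω‖ ^ 2
      = ‖w‖ ^ 2 + t ^ 2 * ‖ξ ω‖ ^ 2 - 2 * t * ⟪w, ξ ω⟫_ℝ := by
    intro ω
    rw [norm_sub_sq_real, real_inner_smul_right, norm_smul, mul_pow, Real.norm_eq_abs, sq_abs]
    ring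
  have hint_inner : Integrable (fun ω => 2 * t * ⟪w, ξ ω⟫_ℝ) P := (hξ.const_inner w).const_mul _
  have hint_sq : Integrable (fun ω => ‖w‖ ^ 2 + t ^ 2 * ‖ξ ω‖ ^ 2) P :=
    (integrable_const _).add (hξ_sq.const_mul _)
  have hcross : ∫ ω, 2 * t * ⟪w, ξ ω⟫_ℝ ∂P = 0 := by
    rw [integral_const_mul, integral_inner hξ, hξ_mean, inner_zero_right, mul_zero]
  calc ∫ ω, ‖Φ ω‖ ^ 2 ∂P
      ≤ ∫ ω, (‖w‖ ^ 2 + t ^ 2 * ‖ξ ω‖ ^ 2 - 2 * t * ⟪w, ξ ω⟫_ℝ) ∂P := by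
        refine integral_mono_of_nonneg (.of_forall fun ω => sq_nonneg _)
          (hint_sq.sub hint_inner) (.of_forall fun ω => ?_)
        dsimp only
        rw [← hexpand]
        exact pow_le_pow_left₀ (norm_nonneg _) (hΦ ω) 2
    _ = ‖w‖ ^ 2 + t ^ 2 * ∫ ω, ‖ξ ω‖ ^ 2 ∂P := by
        rw [integral_sub hint_sq hint_inner, hcross, sub_zero,
          integral_add (integrable_const _) (hξ_sq.const_mul _), integral_const_mul]
        simp

theorem LipschitzWith.norm_sub_sq_le {E F : Type*} [SeminormedAddCommGroup E]
    [SeminormedAddCommGroup F] {f : E → F} {L D : ℝ} (hf : LipschitzWith (Real.toNNReal L) f)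
    {x y : E} (hxy : ‖x - y‖ ≤ D) : ‖f x - f y‖ ^ 2 ≤ L ^ 2 * D ^ 2 := by
  have hlip : ‖f x - f y‖ ≤ max L 0 * D := by
    have := hf.dist_le_mul x y
    rw [dist_eq_norm, dist_eq_norm, Real.coe_toNNReal'] at this
    exact this.trans (mul_le_mul_of_nonneg_left hxy (le_max_right L 0))
  calc ‖f x - f y‖ ^ 2 ≤ (max L 0 * D) ^ 2 := pow_le_pow_left₀ (norm_nonneg _) hlip 2
    _ = max L 0 ^ 2 * D ^ 2 := mul_pow _ _ _
    _ ≤ L ^ 2 * D ^ 2 := by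
        refine mul_le_mul_of_nonneg_right ?_ (sq_nonneg D)
        rw [← sq_abs L]
        exact pow_le_pow_left₀ (le_max_right L 0) (max_le (le_abs_self L) (abs_nonneg L)) 2

theorem ContinuousLinearMap.norm_apply_sub_apply_le {E F : Type*} [SeminormedAddCommGroup E]
    [NormedSpace ℝ E] [SeminormedAddCommGroup F] [NormedSpace ℝ F] {A B : E →L[ℝ] F} {M D : ℝ}
    (hA : ‖A‖ ≤ M) (hB : ‖B‖ ≤ M) {x y : E} (hx : ‖x‖ ≤ D) (hy : ‖y‖ ≤ D) :
    ‖A x - B y‖ ≤ 2 * M * D := by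
  have hM : 0 ≤ M := (norm_nonneg A).trans hA
  calc ‖A x - B y‖ ≤ ‖A‖ * ‖x‖ + ‖B‖ * ‖y‖ :=
        (norm_sub_le _ _).trans (add_le_add (A.le_opNorm x) (B.le_opNorm y))
    _ ≤ M * D + M * D := by gcongr
    _ = 2 * M * D := by ring

theorem norm_add_sq_le_two_mul {E : Type*} [SeminormedAddCommGroup E] (x y : E) :
    ‖x + y‖ ^ 2 ≤ 2 * (‖x‖ ^ 2 + ‖y‖ ^ 2) :=
  (pow_le_pow_left₀ (norm_nonneg _) (norm_add_le x y) 2).trans add_sq_le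

theorem stmt5_general
    (d m n : ℕ)
    (C : Set (EuclideanSpace ℝ (Fin d)))
    (hCcv : Convex ℝ C)
    (D : ℝ) (hD : ∀ x ∈ C, ∀ y ∈ C, dist x y ≤ D)
    (γ : ℝ) (α : ℝ) (hα : α = 0 ∨ α = 1)
    (θk θstar : EuclideanSpace ℝ (Fin d)) (hθk : θk ∈ C) (hθstar : θstar ∈ C)
    (gradf : EuclideanSpace ℝ (Fin d) → EuclideanSpace ℝ (Fin d))
    (L : ℝ) (hL : LipschitzWith (Real.toNNReal L) gradf)
    (A Astar : EuclideanSpace ℝ (Fin m) →L[ℝ] EuclideanSpace ℝ (Fin d))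
    (M : ℝ) (hA : ‖A‖ ≤ M) (hAstar : ‖Astar‖ ≤ M)
    (lhat lstar : EuclideanSpace ℝ (Fin m)) (hlhat : ‖lhat‖ ≤ D) (hlstar : ‖lstar‖ ≤ D)
    (proj : EuclideanSpace ℝ (Fin d) → EuclideanSpace ℝ (Fin d))
    (hprojmem : ∀ x, proj x ∈ C)
    (hprojmin : ∀ x, ∀ y ∈ C, ‖x - proj x‖ ≤ ‖x - y‖)
    (hfix : θstar = proj (θstar - γ • (gradf θstar + (n : ℝ)⁻¹ • Astar lstar)))
    (Ω : Type*) [MeasurableSpace Ω] (P : Measure Ω) [IsProbabilityMeasure P]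
    (G : Ω → EuclideanSpace ℝ (Fin d))  -- `G ω = ∇ℓ(θ^k; Z(ω))`
    (hGint : Integrable G P)
    (hGmean : ∫ ω, G ω ∂P = gradf θk)
    (σ : ℝ) (hGvarint : Integrable (fun ω => ‖G ω - gradf θk‖ ^ 2) P)
    (hGvar : ∫ ω, ‖G ω - gradf θk‖ ^ 2 ∂P ≤ σ ^ 2 * (1 + ‖θk - θstar‖ ^ 2)) :
    ∫ ω, ‖proj (θk - (γ * α) • (G ω + (n : ℝ)⁻¹ • A lhat)) - θstar‖ ^ 2 ∂P
      ≤ ‖θk - θstar‖ ^ 2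
        + 3 * (σ ^ 2 + (σ ^ 2 + L ^ 2) * D ^ 2 + 6 * M ^ 2 * D ^ 2 / (n : ℝ) ^ 2) * γ ^ 2
        - 2 * γ * α * ⟪θk - θstar,
            (gradf θk + (n : ℝ)⁻¹ • A lhat)
              - (gradf θstar + (n : ℝ)⁻¹ • Astar lstar)⟫_ℝ := by
  have hdist : ‖θk - θstar‖ ≤ D := by simpa [dist_eq_norm] using hD θk hθk θstar hθstar
  rcases hα with rfl | rfl
  · have hproj : proj θk = θk := by
      simpa [sub_eq_zero, eq_comm] using hprojmin θk θk hθk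
    simp only [mul_zero, zero_mul, zero_smul, sub_zero, hproj, integral_const, probReal_univ,
      one_smul]
    exact le_add_of_nonneg_right (by positivity)
  · simp only [mul_one]
    set g := (gradf θk + (n : ℝ)⁻¹ • A lhat) - (gradf θstar + (n : ℝ)⁻¹ • Astar lstar) with hg
    -- nonexpansiveness of the projection, applied with `θ* = P_C(θ* - γ h*)`
    have hstep : ∫ ω, ‖proj (θk - γ • (G ω + (n : ℝ)⁻¹ • A lhat)) - θstar‖ ^ 2 ∂P
        ≤ ‖(θk - θstar) - γ • g‖ ^ 2 + γ ^ 2 * ∫ ω, ‖G ω - gradf θk‖ ^ 2 ∂P := by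
      refine integral_norm_sq_le_of_le_norm_sub_smul (ξ := fun ω => G ω - gradf θk)
        (hGint.sub (integrable_const _)) ?_
        hGvarint _ γ fun ω => ?_
      · rw [integral_sub hGint (integrable_const _), hGmean, integral_const]
        simp
      · have := norm_sub_le_of_forall_norm_sub_le hCcv (hprojmem _) (hprojmem _)
          (hprojmin (θk - γ • (G ω + (n : ℝ)⁻¹ • A lhat)))
          (hprojmin (θstar - γ • (gradf θstar + (n : ℝ)⁻¹ • Astar lstar)))
        rw [← hfix] at this
        refine this.trans_eq (congrArg norm ?_)
        rw [hg]
        module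
    have hgap : ‖g‖ ^ 2 ≤ 2 * (L ^ 2 * D ^ 2 + 4 * M ^ 2 * D ^ 2 / (n : ℝ) ^ 2) := by
      have hsplit : g = (gradf θk - gradf θstar) + (n : ℝ)⁻¹ • (A lhat - Astar lstar) := by
        rw [hg]; module
      have hdual : ‖(n : ℝ)⁻¹ • (A lhat - Astar lstar)‖ ^ 2 ≤ 4 * M ^ 2 * D ^ 2 / (n : ℝ) ^ 2 := by
        have h2MD := A.norm_apply_sub_apply_le hA hAstar hlhat hlstar
        calc ‖(n : ℝ)⁻¹ • (A lhat - Astar lstar)‖ ^ 2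
            = ‖A lhat - Astar lstar‖ ^ 2 / (n : ℝ) ^ 2 := by
              rw [norm_smul, mul_pow, norm_inv, Real.norm_natCast, inv_pow, inv_mul_eq_div]
          _ ≤ (2 * M * D) ^ 2 / (n : ℝ) ^ 2 := by gcongr
          _ = 4 * M ^ 2 * D ^ 2 / (n : ℝ) ^ 2 := by ring
      calc ‖g‖ ^ 2 ≤ 2 * (‖gradf θk - gradf θstar‖ ^ 2
            + ‖(n : ℝ)⁻¹ • (A lhat - Astar lstar)‖ ^ 2) := hsplit ▸ norm_add_sq_le_two_mul _ _
        _ ≤ 2 * (L ^ 2 * D ^ 2 + 4 * M ^ 2 * D ^ 2 / (n : ℝ) ^ 2) := by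
          gcongr
          exact hL.norm_sub_sq_le hdist
    have hvar : ∫ ω, ‖G ω - gradf θk‖ ^ 2 ∂P ≤ σ ^ 2 * (1 + D ^ 2) :=
      hGvar.trans (by gcongr)
    have hC₁ : ‖g‖ ^ 2 + ∫ ω, ‖G ω - gradf θk‖ ^ 2 ∂P
        ≤ 3 * (σ ^ 2 + (σ ^ 2 + L ^ 2) * D ^ 2 + 6 * M ^ 2 * D ^ 2 / (n : ℝ) ^ 2) := by
      calc ‖g‖ ^ 2 + ∫ ω, ‖G ω - gradf θk‖ ^ 2 ∂P
          ≤ 2 * (L ^ 2 * D ^ 2 + 4 * M ^ 2 * D ^ 2 / (n : ℝ) ^ 2) + σ ^ 2 * (1 + D ^ 2) :=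
            add_le_add hgap hvar
        _ ≤ _ := by
          rw [← sub_nonneg]
          ring_nf
          positivity
    rw [norm_sub_sq_real, real_inner_smul_right, norm_smul, mul_pow, Real.norm_eq_abs,
      sq_abs] at hstep
    nlinarith [mul_le_mul_of_nonneg_left hC₁ (sq_nonneg γ)]

/-- Primal one-step descent of the asynchronous stochastic primal-dual
algorithm: with `P_C` the nearest-point projection onto the nonempty closed convex set `C`
(of diameter at most `D`), `θ^{k+1} = P_C(θ^k - γ α (∇ℓ(θ^k; Z) + (1/n) A λ̂))`, one has
`E‖θ^{k+1} - θ*‖² ≤ ‖θ^k - θ*‖² + C₁ γ² - 2 γ α ⟨θ^k - θ*, 𝒢 - h*⟩` with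
`C₁ = 3(σ² + (σ² + L²)D² + 6M²D²/n²)`. -/
theorem stmt5
    (d m n : ℕ) (hn : 1 ≤ n)
    (C : Set (EuclideanSpace ℝ (Fin d)))
    (hCne : C.Nonempty) (hCcl : IsClosed C) (hCcv : Convex ℝ C)
    (D : ℝ) (hD : ∀ x ∈ C, ∀ y ∈ C, dist x y ≤ D)
    (γ : ℝ) (hγ : 0 < γ) (α : ℝ) (hα : α = 0 ∨ α = 1)
    (θk θstar : EuclideanSpace ℝ (Fin d)) (hθk : θk ∈ C) (hθstar : θstar ∈ C)
    (gradf : EuclideanSpace ℝ (Fin d) → EuclideanSpace ℝ (Fin d))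
    (L : ℝ) (hL : LipschitzWith (Real.toNNReal L) gradf)
    (A Astar : EuclideanSpace ℝ (Fin m) →L[ℝ] EuclideanSpace ℝ (Fin d))
    (M : ℝ) (hA : ‖A‖ ≤ M) (hAstar : ‖Astar‖ ≤ M)
    (lhat lstar : EuclideanSpace ℝ (Fin m)) (hlhat : ‖lhat‖ ≤ D) (hlstar : ‖lstar‖ ≤ D)
    (proj : EuclideanSpace ℝ (Fin d) → EuclideanSpace ℝ (Fin d))
    (hprojmem : ∀ x, proj x ∈ C)
    (hprojmin : ∀ x, ∀ y ∈ C, ‖x - proj x‖ ≤ ‖x - y‖)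
    (hfix : θstar = proj (θstar - γ • (gradf θstar + (n : ℝ)⁻¹ • Astar lstar)))
    (Ω : Type*) [MeasurableSpace Ω] (P : Measure Ω) [IsProbabilityMeasure P]
    (G : Ω → EuclideanSpace ℝ (Fin d))  -- `G ω = ∇ℓ(θ^k; Z(ω))`
    (hGmeas : Measurable G) (hGint : Integrable G P)
    (hGmean : ∫ ω, G ω ∂P = gradf θk)
    (σ : ℝ) (hGvarint : Integrable (fun ω => ‖G ω - gradf θk‖ ^ 2) P)
    (hGvar : ∫ ω, ‖G ω - gradf θk‖ ^ 2 ∂P ≤ σ ^ 2 * (1 + ‖θk - θstar‖ ^ 2)) :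
    ∫ ω, ‖proj (θk - (γ * α) • (G ω + (n : ℝ)⁻¹ • A lhat)) - θstar‖ ^ 2 ∂P
      ≤ ‖θk - θstar‖ ^ 2
        + 3 * (σ ^ 2 + (σ ^ 2 + L ^ 2) * D ^ 2 + 6 * M ^ 2 * D ^ 2 / (n : ℝ) ^ 2) * γ ^ 2
        - 2 * γ * α * ⟪θk - θstar,
            (gradf θk + (n : ℝ)⁻¹ • A lhat)
              - (gradf θstar + (n : ℝ)⁻¹ • Astar lstar)⟫_ℝ :=
  stmt5_general d m n C hCcv D hD γ α hα θk θstar hθk hθstar gradf L hL A Astar M hA hAstar lhat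
    lstar hlhat hlstar proj hprojmem hprojmin hfix Ω P G hGint hGmean σ hGvarint hGvar
end

section
/- (Auxiliary step-size lemma.) Let a > 0 and p be a positive integer, and let (γ_k)_{k≥1} be a non-increasing sequence with 0 < γ_k ≤ min{1, 1/a} for all k, satisfying γ_{k−1}^p / γ_k^p ≤ 1 + (a/2) γ_k^p for all k ≥ 2. Then for every k ≥ 1, Σ_{j=1}^{k} γ_j^{p+1} ∏_{ℓ=j+1}^{k} (1 − a γ_ℓ) ≤ (2/a) γ_k^p. -/
/-!
Writing `S k` for the discounted sum, `S (k + 1) = S k * (1 - a γ (k+1)) + γ (k+1) ^ (p+1)`, so the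
bound propagates by induction. The ratio condition is exactly what lets the inductive bound
`(2/a) γ_k^p` be rewritten in terms of `g = γ_{k+1}`: it is at most
`(2/a) g^p + g^{2p}`, and the contraction `1 - a g` removes `2 g^{p+1}` from the first term,
which pays for both the new summand `g^{p+1}` and `g^{2p} ≤ g^{p+1}`.
-/

open Finset

section DiscountedSum

variable {R : Type*} [CommSemiring R]

def discountedSum (f c : ℕ → R) (k : ℕ) : R :=
  ∑ j ∈ Icc 1 k, f j * ∏ l ∈ Icc (j + 1) k, c l

@[simp]
lemma discountedSum_zero (f c : ℕ → R) : discountedSum f c 0 = 0 := by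
  simp [discountedSum]

lemma discountedSum_succ (f c : ℕ → R) (k : ℕ) :
    discountedSum f c (k + 1) = discountedSum f c k * c (k + 1) + f (k + 1) := by
  rw [discountedSum, sum_Icc_succ_top (by omega), Icc_eq_empty (by omega : ¬k + 1 + 1 ≤ k + 1),
    prod_empty, mul_one, discountedSum, sum_mul]
  congr 1
  refine sum_congr rfl fun j hj => ?_
  rw [prod_Icc_succ_top (by simp at hj; omega), mul_assoc]

end DiscountedSum

lemma mul_one_sub_add_mul_le {a g u S : ℝ} (ha : 0 < a) (hg : 0 ≤ g) (hag : a * g ≤ 1)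
    (hu : 0 ≤ u) (hug : u ≤ g) (hS : S ≤ 2 / a * ((1 + a / 2 * u) * u)) :
    S * (1 - a * g) + u * g ≤ 2 / a * u := by
  have hcontr : 0 ≤ 1 - a * g := by linarith
  have hexpand : 2 / a * ((1 + a / 2 * u) * u) * (1 - a * g)
      = 2 / a * u - 2 * (u * g) + u * u * (1 - a * g) := by
    field_simp
  have hsq : u * u * (1 - a * g) ≤ u * g :=
    calc u * u * (1 - a * g)
        ≤ u * u := mul_le_of_le_one_right (mul_nonneg hu hu) (by linarith [mul_nonneg ha.le hg])
      _ ≤ u * g := mul_le_mul_of_nonneg_left hug hu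
  calc S * (1 - a * g) + u * g
      ≤ 2 / a * ((1 + a / 2 * u) * u) * (1 - a * g) + u * g := by gcongr
    _ ≤ 2 / a * u := by linarith

lemma discountedSum_pow_le {a : ℝ} (ha : 0 < a) {p : ℕ} (hp : 0 < p) {γ : ℕ → ℝ}
    (hγpos : ∀ k, 0 < γ k) (hγle : ∀ k, γ k ≤ min 1 (1 / a))
    (hratio : ∀ k, 2 ≤ k → γ (k - 1) ^ p / γ k ^ p ≤ 1 + a / 2 * γ k ^ p) (k : ℕ) :
    discountedSum (fun j => γ j ^ (p + 1)) (fun l => 1 - a * γ l) k ≤ 2 / a * γ k ^ p := by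
  induction k with
  | zero =>
    have := hγpos 0
    simp only [discountedSum_zero]
    positivity
  | succ k ih =>
    set g := γ (k + 1)
    have hg := hγpos (k + 1)
    have hag : a * g ≤ 1 := (le_div_iff₀' ha).1 ((hγle (k + 1)).trans (min_le_right _ _))
    have hgp : g ^ p ≤ g :=
      pow_le_of_le_one hg.le ((hγle (k + 1)).trans (min_le_left _ _)) hp.ne'
    have hprev : discountedSum (fun j => γ j ^ (p + 1)) (fun l => 1 - a * γ l) k
        ≤ 2 / a * ((1 + a / 2 * g ^ p) * g ^ p) := by
      rcases Nat.eq_zero_or_pos k with rfl | hk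
      · simp only [discountedSum_zero]
        positivity
      · refine ih.trans (mul_le_mul_of_nonneg_left ?_ (by positivity))
        exact (div_le_iff₀ (pow_pos hg p)).1 (hratio (k + 1) (by omega))
    rw [discountedSum_succ, pow_succ]
    exact mul_one_sub_add_mul_le ha hg.le hag (by positivity) hgp hprev

theorem stmt12_general
    (a : ℝ) (ha : 0 < a) (p : ℕ) (hp : 0 < p)
    (γ : ℕ → ℝ)
    (hγpos : ∀ k, 0 < γ k) (hγle : ∀ k, γ k ≤ min 1 (1 / a))
    (hratio : ∀ k, 2 ≤ k → γ (k - 1) ^ p / γ k ^ p ≤ 1 + a / 2 * γ k ^ p) :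
    ∀ k, 1 ≤ k →
      ∑ j ∈ Finset.Icc 1 k, γ j ^ (p + 1) * ∏ l ∈ Finset.Icc (j + 1) k, (1 - a * γ l)
        ≤ 2 / a * γ k ^ p :=
  fun k _ => discountedSum_pow_le ha hp hγpos hγle hratio k

/-- Auxiliary step-size lemma: for `a > 0`, a positive integer `p`, and a
non-increasing sequence `(γ_k)` with `0 < γ_k ≤ min{1, 1/a}` and
`γ_{k-1}^p / γ_k^p ≤ 1 + (a/2) γ_k^p` for `k ≥ 2`, one has for every `k ≥ 1`
`Σ_{j=1}^k γ_j^{p+1} Π_{ℓ=j+1}^k (1 - a γ_ℓ) ≤ (2/a) γ_k^p`. -/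
theorem stmt12
    (a : ℝ) (ha : 0 < a) (p : ℕ) (hp : 0 < p)
    (γ : ℕ → ℝ) (hγmono : Antitone γ)
    (hγpos : ∀ k, 0 < γ k) (hγle : ∀ k, γ k ≤ min 1 (1 / a))
    (hratio : ∀ k, 2 ≤ k → γ (k - 1) ^ p / γ k ^ p ≤ 1 + a / 2 * γ k ^ p) :
    ∀ k, 1 ≤ k →
      ∑ j ∈ Finset.Icc 1 k, γ j ^ (p + 1) * ∏ l ∈ Finset.Icc (j + 1) k, (1 - a * γ l)
        ≤ 2 / a * γ k ^ p :=
  stmt12_general a ha p hp γ hγpos hγle hratio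
end

section
/- (Windowed recursion bound; deterministic skeleton of the main theorem.) Let a > 0, C ≥ 0, and B a positive integer. Let (γ_k)_{k≥1} be positive and non-increasing with a γ_k ≤ 1 for all k and γ_{s−B} / γ_s ≤ 1 + (a/2) γ_s for all s ≥ 1, under the convention γ_j := γ_1 for all j ≤ 0. Let (Δ^k)_{k≥0} be nonnegative reals satisfying, for all k ≥ 0, Δ^{k+1} ≤ (1 − a γ_{k−B+2}) Δ^{max(k−B+1, 0)} + C γ_{k−B+2}². Then for every k ≥ 0, Δ^{k+1} ≤ ∏_{i=1}^{q} (1 − a γ_{k−iB+2}) · Δ^0 + (2C/a) γ_{k−B+2}, where q = ⌊(k+1)/B⌋. -/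
/-!
Each application of the recursion preserves the shape of the bound
`Δ^{k+1} ≤ P_k Δ^0 + (2C/a) γ_{k-B+2}`, so it propagates by strong induction in steps of `B`.
The product gains the factor `1 - a γ_{k-B+2}`, and the ratio condition
`γ_{s-B} ≤ γ_s (1 + (a/2) γ_s)` makes the contracted error term absorb the fresh noise `C γ_s²`
with a spare `a C γ_s³`. For `k < B` the window reaches back only to `Δ^1` (the index
`k - B + 1` is truncated in `ℕ`), and the instance `k = 0` bounds `Δ^1` by `(C/a) γ_1`.
-/

open Finset

theorem prod_Icc_one_succ {M : Type*} [CommMonoid M] (f : ℕ → M) (q : ℕ) :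
    ∏ i ∈ Icc 1 (q + 1), f i = f 1 * ∏ i ∈ Icc 1 q, f (i + 1) := by
  induction q with
  | zero => simp
  | succ q ih => rw [prod_Icc_succ_top (by omega), ih, prod_Icc_succ_top (by omega), mul_assoc]

theorem prod_window_add_period {M : Type*} [CommMonoid M] (f : ℤ → M) {B : ℕ} (hB : 0 < B)
    (k : ℕ) :
    ∏ i ∈ Icc 1 ((k + B + 1) / B), f (((k + B : ℕ) : ℤ) - (i : ℤ) * B + 2)
      = f (k + 2) * ∏ i ∈ Icc 1 ((k + 1) / B), f ((k : ℤ) - (i : ℤ) * B + 2) := by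
  rw [add_right_comm, Nat.add_div_right _ hB, prod_Icc_one_succ]
  push_cast
  ring_nf

theorem apply_eq_apply_one_of_le_one {α : Type*} {γ : ℤ → α} (h : ∀ j : ℤ, j ≤ 0 → γ j = γ 1)
    {j : ℤ} (hj : j ≤ 1) : γ j = γ 1 := by
  rcases hj.lt_or_eq with hj | rfl
  · exact h j (by omega)
  · rfl

theorem le_div_mul_of_le_one_sub_mul_add {a C g x : ℝ} (ha : 0 < a) (hg : 0 < g)
    (hx : x ≤ (1 - a * g) * x + C * g ^ 2) : x ≤ C / a * g := by
  rw [div_mul_eq_mul_div, le_div_iff₀ ha]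
  nlinarith

theorem le_one_sub_mul_add_of_le {a C g g' x y P : ℝ} (ha : 0 < a) (hC : 0 ≤ C) (hg : 0 ≤ g)
    (hag : a * g ≤ 1) (hg' : g' ≤ g * (1 + a / 2 * g))
    (hx : x ≤ (1 - a * g) * y + C * g ^ 2) (hy : y ≤ P + 2 * C / a * g') :
    x ≤ (1 - a * g) * P + 2 * C / a * g := by
  have hcontr : 0 ≤ 1 - a * g := by linarith
  have herr : (1 - a * g) * (2 * C / a * g') + C * g ^ 2 ≤ 2 * C / a * g :=
    calc (1 - a * g) * (2 * C / a * g') + C * g ^ 2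
        ≤ (1 - a * g) * (2 * C / a * (g * (1 + a / 2 * g))) + C * g ^ 2 := by gcongr
      _ = 2 * C / a * g - a * C * g ^ 3 := by field_simp; ring
      _ ≤ 2 * C / a * g := sub_le_self _ (by positivity)
  calc x ≤ (1 - a * g) * (P + 2 * C / a * g') + C * g ^ 2 := hx.trans (by gcongr)
    _ = (1 - a * g) * P + ((1 - a * g) * (2 * C / a * g') + C * g ^ 2) := by ring
    _ ≤ (1 - a * g) * P + 2 * C / a * g := by gcongr

theorem stmt13_general
    (a C : ℝ) (ha : 0 < a) (hC : 0 ≤ C) (B : ℕ) (hB : 0 < B)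
    (γ : ℤ → ℝ) (hγconv : ∀ j : ℤ, j ≤ 0 → γ j = γ 1)
    (hγpos : ∀ j, 0 < γ j)
    (hγa : ∀ j, a * γ j ≤ 1)
    (hratio : ∀ s : ℤ, 1 ≤ s → γ (s - B) / γ s ≤ 1 + a / 2 * γ s)
    (Δ : ℕ → ℝ) (hΔ : ∀ k, 0 ≤ Δ k)
    (hrec : ∀ k : ℕ, Δ (k + 1)
      ≤ (1 - a * γ ((k : ℤ) - B + 2)) * Δ (k - B + 1) + C * γ ((k : ℤ) - B + 2) ^ 2) :
    ∀ k : ℕ, Δ (k + 1)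
      ≤ (∏ i ∈ Finset.Icc 1 ((k + 1) / B), (1 - a * γ ((k : ℤ) - (i : ℤ) * B + 2))) * Δ 0
        + 2 * C / a * γ ((k : ℤ) - B + 2) := by
  have hγ_early : ∀ k : ℕ, k < B → γ ((k : ℤ) - B + 2) = γ 1 := fun k hk =>
    apply_eq_apply_one_of_le_one hγconv (by omega)
  have hΔ1 : Δ 1 ≤ 2 * C / a * γ 1 := by
    have h0 := hrec 0
    rw [Nat.zero_sub, hγ_early 0 hB, zero_add] at h0
    calc Δ 1 ≤ C / a * γ 1 := le_div_mul_of_le_one_sub_mul_add ha (hγpos 1) h0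
      _ ≤ 2 * C / a * γ 1 := by have := hγpos 1; gcongr; linarith
  intro k
  induction k using Nat.strong_induction_on with
  | _ k IH =>
  rcases lt_or_ge k B with hk | hk
  · have hγ1 := hγpos 1
    have hrk : Δ (k + 1) ≤ (1 - a * γ 1) * Δ 1 + C * γ 1 ^ 2 := by
      simpa only [hγ_early k hk, Nat.sub_eq_zero_of_le hk.le, zero_add] using hrec k
    have hstep := le_one_sub_mul_add_of_le (P := 0) ha hC hγ1.le (hγa 1)
      (le_mul_of_one_le_right hγ1.le (le_add_of_nonneg_right (by positivity))) hrk
      (by rwa [zero_add])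
    have hprod : 0 ≤ ∏ i ∈ Icc 1 ((k + 1) / B), (1 - a * γ ((k : ℤ) - (i : ℤ) * B + 2)) :=
      prod_nonneg fun i _ => sub_nonneg.2 (hγa _)
    rw [hγ_early k hk]
    linarith [mul_nonneg hprod (hΔ 0)]
  · obtain ⟨k, rfl⟩ : ∃ k', k = k' + B := ⟨k - B, by omega⟩
    have hidx : ((k + B : ℕ) : ℤ) - B + 2 = k + 2 := by push_cast; ring
    have hrk := hrec (k + B)
    rw [Nat.add_sub_cancel, hidx] at hrk
    have hγ_ratio : γ ((k : ℤ) - B + 2) ≤ γ (k + 2) * (1 + a / 2 * γ (k + 2)) := by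
      have := hratio (k + 2) (by omega)
      rwa [div_le_iff₀ (hγpos _), add_sub_right_comm, mul_comm] at this
    rw [prod_window_add_period (fun j => 1 - a * γ j) hB, hidx, mul_assoc]
    exact le_one_sub_mul_add_of_le ha hC (hγpos _).le (hγa _) hγ_ratio hrk (IH k (by omega))

/-- Windowed recursion bound (deterministic skeleton of the main theorem):
if the nonnegative reals `Δ^k` satisfy
`Δ^{k+1} ≤ (1 - a γ_{k-B+2}) Δ^{max(k-B+1, 0)} + C γ_{k-B+2}²`
for a positive non-increasing step-size sequence `γ : ℤ → ℝ` with `γ_j = γ_1` for `j ≤ 0`,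
`a γ_j ≤ 1`, and `γ_{s-B}/γ_s ≤ 1 + (a/2) γ_s` for `s ≥ 1`, then for every `k`
`Δ^{k+1} ≤ Π_{i=1}^{⌊(k+1)/B⌋} (1 - a γ_{k-iB+2}) · Δ^0 + (2C/a) γ_{k-B+2}`. -/
theorem stmt13
    (a C : ℝ) (ha : 0 < a) (hC : 0 ≤ C) (B : ℕ) (hB : 0 < B)
    (γ : ℤ → ℝ) (hγconv : ∀ j : ℤ, j ≤ 0 → γ j = γ 1)
    (hγpos : ∀ j, 0 < γ j) (hγmono : Antitone γ)
    (hγa : ∀ j, a * γ j ≤ 1)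
    (hratio : ∀ s : ℤ, 1 ≤ s → γ (s - B) / γ s ≤ 1 + a / 2 * γ s)
    (Δ : ℕ → ℝ) (hΔ : ∀ k, 0 ≤ Δ k)
    (hrec : ∀ k : ℕ, Δ (k + 1)
      ≤ (1 - a * γ ((k : ℤ) - B + 2)) * Δ (k - B + 1) + C * γ ((k : ℤ) - B + 2) ^ 2) :
    ∀ k : ℕ, Δ (k + 1)
      ≤ (∏ i ∈ Finset.Icc 1 ((k + 1) / B), (1 - a * γ ((k : ℤ) - (i : ℤ) * B + 2))) * Δ 0
        + 2 * C / a * γ ((k : ℤ) - B + 2) :=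
  stmt13_general a C ha hC B hB γ hγconv hγpos hγa hratio Δ hΔ hrec
end
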